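/- arXiv:0905.1763 — 2 statements merged into one kernel-verified Lean document; each statement's English description precedes it below -/
import Mathlib

section
/- For any graph G, k(G) ≥ min over vertices v of θ_V(N_G(v)), where θ_V denotes the vertex clique cover number of the subgraph induced on the open neighborhood N_G(v). -/
open SimpleGraph

/-- The competition graph of a digraph `D` (given as a relation): distinct vertices
`x`, `y` are adjacent iff they have a common out-neighbor in `D`. -/
def CompetitionGraph {V : Type*} (D : V → V → Prop) : SimpleGraph V where
  Adj x y := x ≠ y ∧ ∃ v, D x v ∧ D y v
  symm := ⟨by rintro x y ⟨h, v, hx, hy⟩; exact ⟨h.symm, v, hy, hx⟩⟩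
  loopless := ⟨by rintro x ⟨h, -⟩; exact h rfl⟩

/-- A digraph is acyclic iff it has no directed cycle, i.e. no vertex reaches itself
by a nonempty directed walk. -/
def DigraphAcyclic {V : Type*} (D : V → V → Prop) : Prop :=
  ∀ v, ¬ Relation.TransGen D v v

/-- The graph `G` together with `k` additional isolated vertices. -/
def addIsolated {V : Type*} (G : SimpleGraph V) (k : ℕ) : SimpleGraph (V ⊕ Fin k) where
  Adj a b := ∃ x y, a = Sum.inl x ∧ b = Sum.inl y ∧ G.Adj x y
  symm := ⟨by rintro a b ⟨x, y, rfl, rfl, h⟩; exact ⟨y, x, rfl, rfl, h.symm⟩⟩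
  loopless := ⟨by
    rintro a ⟨x, y, rfl, hy, h⟩
    obtain rfl := Sum.inl_injective hy
    exact G.irrefl h⟩

/-- `G` plus `k` isolated vertices is the competition graph of some acyclic digraph. -/
def IsCompetitionWitness {V : Type*} (G : SimpleGraph V) (k : ℕ) : Prop :=
  ∃ D : (V ⊕ Fin k) → (V ⊕ Fin k) → Prop,
    DigraphAcyclic D ∧ CompetitionGraph D = addIsolated G k

/-- The competition number of `G`: the least `k` such that `G` plus `k` isolated
vertices is the competition graph of an acyclic digraph. -/
noncomputable def compNum {V : Type*} (G : SimpleGraph V) : ℕ :=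
  sInf {k | IsCompetitionWitness G k}

/-- The generalized edge clique cover number `θ_E(F; H)`: the minimum number of cliques
of `G` contained in the vertex set `H` (i.e. cliques of the induced subgraph on `H`)
needed so that every edge in `F` has both endpoints in some clique of the family. -/
noncomputable def thetaEOn {V : Type*} (G : SimpleGraph V) (F : Set (Sym2 V)) (H : Set V) : ℕ :=
  sInf {n | ∃ f : Fin n → Set V,
    (∀ i, f i ⊆ H ∧ G.IsClique (f i)) ∧ ∀ e ∈ F, ∃ i, ∀ x ∈ e, x ∈ f i}

/-- The edge clique cover number `θ_E(G)`. -/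
noncomputable def thetaE {V : Type*} (G : SimpleGraph V) : ℕ :=
  thetaEOn G G.edgeSet Set.univ

/-- The vertex clique cover number of the subgraph of `G` induced on `S`: the minimum
number of cliques of `G` contained in `S` whose union covers `S`. -/
noncomputable def thetaVOn {V : Type*} (G : SimpleGraph V) (S : Set V) : ℕ :=
  sInf {n | ∃ f : Fin n → Set V,
    (∀ i, f i ⊆ S ∧ G.IsClique (f i)) ∧ ∀ v ∈ S, ∃ i, v ∈ f i}

/-- The closed neighborhood `N_G[U]` of a vertex subset. -/
def closedNbhd {V : Type*} (G : SimpleGraph V) (U : Set V) : Set V :=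
  U ∪ {v | ∃ u ∈ U, G.Adj u v}

/-- The set `E_G[U]` of edges of `G` with at least one endpoint in `U`. -/
def incidentEdges {V : Type*} (G : SimpleGraph V) (U : Set V) : Set (Sym2 V) :=
  {e | e ∈ G.edgeSet ∧ ∃ x ∈ e, x ∈ U}

/-!
Let `D` be an acyclic digraph whose competition graph is `G` plus `k` isolated vertices. By
acyclicity some vertex `v` of `G` has no prey in `G`, so each neighbour `u` of `v` shares with
`v` a prey among the `k` new vertices. For each new vertex `j`, the neighbours of `v` preying
on `j` form a clique of `G`; these `k` cliques cover `N(v)`. Such a `D` exists for `k = |E(G)|`: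
the two ends of every edge prey on a new vertex of their own.
-/

section

variable {V : Type*}

section Acyclic

variable {D : V → V → Prop}

theorem digraphAcyclic_of_forall_not_rel_rel (h : ∀ a b c, D a b → ¬ D b c) :
    DigraphAcyclic D := by
  intro v hv
  obtain ⟨b, hvb, hbv⟩ := Relation.TransGen.head'_iff.mp hv
  rcases hbv.cases_head with rfl | ⟨c, hbc, -⟩
  · exact h _ _ _ hvb hvb
  · exact h _ _ _ hvb hbc

theorem DigraphAcyclic.wellFounded_flip [Finite V] (h : DigraphAcyclic D) :
    WellFounded (flip D) := by
  have : IsTrans V (Relation.TransGen (flip D)) := ⟨fun _ _ _ => Relation.TransGen.trans⟩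
  have : Std.Irrefl (Relation.TransGen (flip D)) :=
    ⟨fun a ha => h a (Relation.transGen_swap.mp ha)⟩
  exact (Finite.wellFounded_of_trans_of_irrefl _).mono fun _ _ => Relation.TransGen.single

theorem DigraphAcyclic.exists_mem_forall_not_rel [Finite V] (h : DigraphAcyclic D)
    {S : Set V} (hS : S.Nonempty) : ∃ v ∈ S, ∀ w ∈ S, ¬ D v w :=
  h.wellFounded_flip.has_min S hS

end Acyclic

@[simp]
theorem addIsolated_adj_inl_inl {G : SimpleGraph V} {k : ℕ} {x y : V} :
    (addIsolated G k).Adj (.inl x) (.inl y) ↔ G.Adj x y := by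
  simp [addIsolated]

def incidenceDigraph (G : SimpleGraph V) {k : ℕ} (g : G.edgeSet ≃ Fin k) :
    V ⊕ Fin k → V ⊕ Fin k → Prop
  | .inl x, .inr j => x ∈ (g.symm j : Sym2 V)
  | _, _ => False

theorem isCompetitionWitness_of_edgeSet_equiv {G : SimpleGraph V} {k : ℕ} (g : G.edgeSet ≃ Fin k) :
    IsCompetitionWitness G k := by
  refine ⟨incidenceDigraph G g, digraphAcyclic_of_forall_not_rel_rel ?_, ?_⟩
  · rintro (_ | _) (_ | _) (_ | _) <;> simp [incidenceDigraph]
  · ext (x | i) (y | j)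
    · simp only [CompetitionGraph, incidenceDigraph, Sum.exists, Sum.inl.injEq, ne_eq, and_self,
        exists_false, false_or, addIsolated_adj_inl_inl]
      constructor
      · rintro ⟨hxy, j, hx, hy⟩
        simpa [(Sym2.mem_and_mem_iff hxy).mp ⟨hx, hy⟩] using (g.symm j).2
      · exact fun h => ⟨h.ne, g ⟨s(x, y), h⟩, by simp⟩
    all_goals simp [CompetitionGraph, incidenceDigraph, addIsolated]

theorem IsCompetitionWitness.exists_thetaVOn_neighborSet_le [Finite V] [Nonempty V]
    {G : SimpleGraph V} {k : ℕ} (hw : IsCompetitionWitness G k) :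
    ∃ v, thetaVOn G (G.neighborSet v) ≤ k := by
  obtain ⟨D, hD, hDG⟩ := hw
  have adj_iff (x y : V) : (CompetitionGraph D).Adj (.inl x) (.inl y) ↔ G.Adj x y := by
    rw [hDG, addIsolated_adj_inl_inl]
  obtain ⟨_, ⟨v, rfl⟩, hv⟩ :=
    hD.exists_mem_forall_not_rel (Set.range_nonempty (@Sum.inl V (Fin k)))
  let cover (j : Fin k) : Set V := {u ∈ G.neighborSet v | D (.inl u) (.inr j)}
  have cover_isClique (j : Fin k) : G.IsClique (cover j) := fun x hx y hy hxy =>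
    (adj_iff x y).mp ⟨Sum.inl_injective.ne hxy, _, hx.2, hy.2⟩
  have cover_covers (u : V) (hu : u ∈ G.neighborSet v) : ∃ j, u ∈ cover j := by
    obtain ⟨-, w | j, hvw, huw⟩ := (adj_iff v u).mpr hu
    · exact absurd hvw (hv _ ⟨w, rfl⟩)
    · exact ⟨j, hu, huw⟩
  exact ⟨v, Nat.sInf_le
    ⟨cover, fun j => ⟨Set.sep_subset _ _, cover_isClique j⟩, cover_covers⟩⟩

end

theorem opsut_neighborhood_bound {V : Type*} [Fintype V] [Nonempty V]
    (G : SimpleGraph V) :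
    compNum G ≥ sInf (Set.range fun v => thetaVOn G (G.neighborSet v)) := by
  have hw : IsCompetitionWitness G (compNum G) :=
    Nat.sInf_mem (s := {k | IsCompetitionWitness G k})
      ⟨_, isCompetitionWitness_of_edgeSet_equiv (Finite.equivFin G.edgeSet)⟩
  obtain ⟨v, hv⟩ := hw.exists_thetaVOn_neighborSet_le
  exact (Nat.sInf_le (Set.mem_range_self v)).trans hv
end

section
/- The competition number of the icosahedron graph equals 4. -/
open SimpleGraph

/-- The edge list of the icosahedron graph (pentagonal antiprism on `1..10` together
with apexes `0` and `11`). -/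
def icosaEdges : List (ℕ × ℕ) :=
  [(0,1),(0,2),(0,3),(0,4),(0,5),(1,2),(2,3),(3,4),(4,5),(5,1),
   (11,6),(11,7),(11,8),(11,9),(11,10),(6,7),(7,8),(8,9),(9,10),(10,6),
   (1,6),(1,7),(2,7),(2,8),(3,8),(3,9),(4,9),(4,10),(5,10),(5,6)]

/-- The icosahedron graph: the 5-regular graph on 12 vertices with 30 edges
arising as the 1-skeleton of the icosahedron. -/
def Icosahedron : SimpleGraph (Fin 12) :=
  SimpleGraph.fromRel (fun i j => ((i : ℕ), (j : ℕ)) ∈ icosaEdges)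

/-!
For the upper bound, the icosahedron with four isolated vertices is the competition graph of an
explicit acyclic digraph whose vertices have in-neighbourhoods that are cliques.

For the lower bound, take an acyclic digraph `D` whose competition graph is `G` plus `k`
isolated vertices, and the last three vertices `u₁, u₂, u₃` of `G`, in this order, in a
topological order of `D`. All arcs leaving them end in `u₂`, `u₃` or one of the new
vertices, and the in-neighbourhoods of these `k + 2` vertices are cliques covering every edge
at `u₁, u₂, u₃`. In the icosahedron, which is `5`-regular and `K₄`-free, such a cover needs at
least six cliques: every `uᵢ` lies in at least three of them, two non-adjacent `uᵢ` share none,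
and if the `uᵢ` form a triangle, the neighbour of `uᵢ` adjacent to neither other `uⱼ` gives
`uᵢ` a clique of its own; with at most five cliques, the at most two remaining ones would each
have to contain the whole triangle, and so both coincide with it.
-/

open Finset

/-- A witness for `thetaEOn G (incidentEdges G U) Set.univ ≤ #𝒞`. -/
def IsIncidentEdgeCliqueCover {V : Type*} (G : SimpleGraph V) (U : Finset V)
    (𝒞 : Finset (Finset V)) : Prop :=
  (∀ C ∈ 𝒞, G.IsClique (C : Set V)) ∧ ∀ u ∈ U, ∀ v, G.Adj u v → ∃ C ∈ 𝒞, u ∈ C ∧ v ∈ C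

section CompetitionGraph

variable {V : Type*} {k : ℕ}

@[simp]
lemma addIsolated_adj_inl {G : SimpleGraph V} {x y : V} :
    (addIsolated G k).Adj (.inl x) (.inl y) ↔ G.Adj x y := by
  simp [addIsolated]

lemma digraphAcyclic_of_forall_lt {D : V → V → Prop} (r : V → ℕ) (h : ∀ a b, D a b → r a < r b) :
    DigraphAcyclic D := by
  have hr : ∀ {a b}, Relation.TransGen D a b → r a < r b := fun hab => by
    induction hab with
    | single hab => exact h _ _ hab
    | tail _ hbc ih => exact ih.trans (h _ _ hbc)
  exact fun v hv => (hr hv).false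

section Closed

variable {α : Type*} [Fintype α] (r : α → α → Prop) [IsTrans α r] [Std.Irrefl r]

lemma exists_notMem_forall_rel_mem {U : Finset α} (hU : #U < Fintype.card α) :
    ∃ v ∉ U, ∀ w, r v w → w ∈ U := by
  classical
  have : IsTrans α (flip r) := ⟨fun _ _ _ hab hbc => trans_of r hbc hab⟩
  have : Std.Irrefl (flip r) := ⟨fun a => irrefl (r := r) a⟩
  obtain ⟨v, hv, hmax⟩ := (Finite.wellFounded_of_trans_of_irrefl (flip r)).has_min
    ((Uᶜ : Finset α) : Set α) (coe_nonempty.2 (card_pos.1 (by rw [card_compl]; omega)))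
  exact ⟨v, by simpa using hv, fun w hvw => by_contra fun hw => hmax w (by simpa using hw) hvw⟩

lemma exists_card_eq_forall_rel_mem {m : ℕ} (hm : m ≤ Fintype.card α) :
    ∃ U : Finset α, #U = m ∧ ∀ u ∈ U, ∀ w, r u w → w ∈ U := by
  classical
  induction m with
  | zero => exact ⟨∅, rfl, by simp⟩
  | succ m ih =>
    obtain ⟨U, hUm, hU⟩ := ih (by omega)
    obtain ⟨v, hv, hvU⟩ := exists_notMem_forall_rel_mem r (U := U) (by omega)
    refine ⟨insert v U, by rw [card_insert_of_notMem hv, hUm], ?_⟩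
    simp only [mem_insert, forall_eq_or_imp]
    exact ⟨fun w hw => .inr (hvU w hw), fun u hu w hw => .inr (hU u hu w hw)⟩

end Closed

theorem IsCompetitionWitness.exists_isIncidentEdgeCliqueCover [Fintype V] {G : SimpleGraph V}
    (h : IsCompetitionWitness G k) {m : ℕ} (hm : 0 < m) (hmV : m ≤ Fintype.card V) :
    ∃ U : Finset V, #U = m ∧ ∃ 𝒞, #𝒞 ≤ m - 1 + k ∧ IsIncidentEdgeCliqueCover G U 𝒞 := by
  classical
  obtain ⟨D, hD, hDG⟩ := h
  have hadj : ∀ x y, G.Adj x y ↔ (CompetitionGraph D).Adj (.inl x) (.inl y) := by simp [hDG]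
  let r : V → V → Prop := fun u w => Relation.TransGen D (.inl u) (.inl w)
  have : IsTrans V r := ⟨fun _ _ _ => Relation.TransGen.trans⟩
  have : Std.Irrefl r := ⟨fun u => hD _⟩
  obtain ⟨U', hU'm, hU'⟩ := exists_card_eq_forall_rel_mem r (m := m - 1) (by omega)
  obtain ⟨v, hv, hvU'⟩ := exists_notMem_forall_rel_mem r (U := U') (by omega)
  let S : Finset (V ⊕ Fin k) := U'.map .inl ∪ univ.map .inr
  have hS : ∀ u ∈ insert v U', ∀ w, D (.inl u) w → w ∈ S := by
    rintro u hu (x | t) hux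
    · simp only [S, mem_union, mem_map, Function.Embedding.inl_apply, Sum.inl.injEq,
        exists_eq_right]
      left
      rcases mem_insert.1 hu with rfl | hu
      exacts [hvU' x (.single hux), hU' u hu x (.single hux)]
    · simp [S]
  refine ⟨insert v U', by rw [card_insert_of_notMem hv, hU'm]; omega,
    S.image fun w => ({x | D (.inl x) w} : Finset V), ?_, ?_, ?_⟩
  · refine card_image_le.trans ((card_union_le _ _).trans ?_)
    simp [hU'm]
  · simp only [mem_image, forall_exists_index, and_imp]
    rintro _ w - rfl x hx y hy hxy
    exact (hadj x y).2 ⟨by simpa using hxy, w, by simpa using hx, by simpa using hy⟩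
  · intro u hu v huv
    obtain ⟨-, w, huw, hvw⟩ := (hadj u v).1 huv
    exact ⟨_, mem_image_of_mem _ (hS u hu w huw), by simpa using huw, by simpa using hvw⟩

end CompetitionGraph

section CliqueFree

variable {V : Type*} {G : SimpleGraph V}

lemma SimpleGraph.CliqueFree.card_le_of_isClique {n : ℕ} (hG : G.CliqueFree (n + 1))
    {s : Finset V} (hs : G.IsClique (s : Set V)) : #s ≤ n := by
  by_contra! hn
  obtain ⟨t, hts, ht⟩ := exists_subset_card_eq (show n + 1 ≤ #s by omega)
  exact hG t ⟨hs.subset (by simpa using hts), ht⟩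

variable [DecidableEq V] {U : Finset V} {𝒞 : Finset (Finset V)}

lemma card_filter_mem_add_card_filter_mem_le (h𝒞 : ∀ C ∈ 𝒞, G.IsClique (C : Set V)) {x y : V}
    (hxy : x ≠ y) (hnadj : ¬G.Adj x y) : #{C ∈ 𝒞 | x ∈ C} + #{C ∈ 𝒞 | y ∈ C} ≤ #𝒞 := by
  have hdisj : Disjoint {C ∈ 𝒞 | x ∈ C} {C ∈ 𝒞 | y ∈ C} := by
    simp only [Finset.disjoint_left, mem_filter, not_and, and_imp]
    exact fun C hC hx _ hy => hnadj (h𝒞 C hC hx hy hxy)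
  rw [← card_union_of_disjoint hdisj]
  exact card_le_card (union_subset (filter_subset _ _) (filter_subset _ _))

namespace IsIncidentEdgeCliqueCover

lemma degree_le_two_mul (hG : G.CliqueFree 4) (h : IsIncidentEdgeCliqueCover G U 𝒞) {u : V}
    (hu : u ∈ U) [Fintype (G.neighborSet u)] : G.degree u ≤ 2 * #{C ∈ 𝒞 | u ∈ C} := by
  have hsub : G.neighborFinset u ⊆ {C ∈ 𝒞 | u ∈ C}.biUnion (·.erase u) := by
    intro v huv
    obtain ⟨C, hC, huC, hvC⟩ := h.2 u hu v ((G.mem_neighborFinset u v).1 huv)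
    exact mem_biUnion.2 ⟨C, mem_filter.2 ⟨hC, huC⟩,
      mem_erase.2 ⟨G.ne_of_adj ((G.mem_neighborFinset u v).1 huv) |>.symm, hvC⟩⟩
  calc G.degree u = #(G.neighborFinset u) := (G.card_neighborFinset_eq_degree u).symm
    _ ≤ ∑ C ∈ {C ∈ 𝒞 | u ∈ C}, #(C.erase u) := (card_le_card hsub).trans card_biUnion_le
    _ ≤ #{C ∈ 𝒞 | u ∈ C} • 2 := sum_le_card_nsmul _ _ _ fun C hC => by
      have := hG.card_le_of_isClique (h.1 C (mem_filter.1 hC).1)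
      rw [card_erase_of_mem (mem_filter.1 hC).2]
      omega
    _ = 2 * #{C ∈ 𝒞 | u ∈ C} := by rw [smul_eq_mul, mul_comm]

lemma exists_inter_eq_singleton (h : IsIncidentEdgeCliqueCover G U 𝒞) {u w : V} (hu : u ∈ U)
    (hw : w ∉ U) (huw : G.Adj u w) (hwU : ∀ v ∈ U, v ≠ u → ¬G.Adj w v) :
    ∃ C ∈ 𝒞, C ∩ U = {u} := by
  obtain ⟨C, hC, huC, hwC⟩ := h.2 u hu w huw
  refine ⟨C, hC, eq_singleton_iff_unique_mem.2 ⟨mem_inter.2 ⟨huC, hu⟩, fun v hv => ?_⟩⟩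
  obtain ⟨hvC, hvU⟩ := mem_inter.1 hv
  by_contra hvu
  exact hwU v hvU hvu (h.1 C hC hwC hvC (ne_of_mem_of_not_mem hvU hw).symm)

end IsIncidentEdgeCliqueCover

lemma six_le_card_of_forall_exists_inter_eq_singleton (hG : G.CliqueFree 4)
    (h𝒞 : ∀ C ∈ 𝒞, G.IsClique (C : Set V)) (hU : #U = 3)
    (hprivate : ∀ u ∈ U, ∃ C ∈ 𝒞, C ∩ U = {u}) (hmem : ∀ u ∈ U, 3 ≤ #{C ∈ 𝒞 | u ∈ C}) :
    6 ≤ #𝒞 := by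
  choose! P hP𝒞 hPU using hprivate
  have hPinj : Set.InjOn P U := fun u hu v hv huv =>
    singleton_injective ((hPU u hu).symm.trans (huv ▸ hPU v hv))
  have hPR : U.image P ⊆ 𝒞 := by simpa [image_subset_iff] using hP𝒞
  set R := 𝒞 \ U.image P
  have hR : #R = #𝒞 - 3 := by rw [card_sdiff_of_subset hPR, card_image_of_injOn hPinj, hU]
  have hRfilter : ∀ u ∈ U, #{C ∈ 𝒞 | u ∈ C} ≤ #{C ∈ R | u ∈ C} + 1 := by
    intro u hu
    refine (card_le_card fun C hC => ?_).trans (card_insert_le (P u) _)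
    obtain ⟨hC𝒞, huC⟩ := mem_filter.1 hC
    by_cases hCP : C ∈ U.image P
    · obtain ⟨v, hv, rfl⟩ := mem_image.1 hCP
      have : u ∈ P v ∩ U := mem_inter.2 ⟨huC, hu⟩
      rw [hPU v hv, mem_singleton] at this
      exact this ▸ mem_insert_self _ _
    · exact mem_insert_of_mem (mem_filter.2 ⟨mem_sdiff.2 ⟨hC𝒞, hCP⟩, huC⟩)
  by_contra! h𝒞6
  have hRmem : ∀ u ∈ U, ∀ C ∈ R, u ∈ C := fun u hu => filter_eq_self.1 <|
    eq_of_subset_of_card_le (filter_subset _ R)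
      (by have := hRfilter u hu; have := hmem u hu; omega)
  have hRU : R ⊆ {U} := fun C hC => mem_singleton.2 <|
    (eq_of_subset_of_card_le (s := U) (t := C) (fun u hu => hRmem u hu C hC)
      (hU ▸ hG.card_le_of_isClique (h𝒞 C (mem_sdiff.1 hC).1))).symm
  obtain ⟨u, hu⟩ := card_pos.1 (show 0 < #U by omega)
  have := hRfilter u hu
  have := hmem u hu
  have := card_filter_le R (u ∈ ·)
  have := (card_le_card hRU).trans_eq (card_singleton U)
  omega

end CliqueFree

namespace Icosahedron

instance : DecidableRel Icosahedron.Adj := fun a b =>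
  inferInstanceAs (Decidable (a ≠ b ∧ (((a : ℕ), (b : ℕ)) ∈ icosaEdges ∨
    ((b : ℕ), (a : ℕ)) ∈ icosaEdges)))

lemma degree_eq (v : Fin 12) : Icosahedron.degree v = 5 := by
  revert v; decide

lemma cliqueFree_four : Icosahedron.CliqueFree 4 := by
  have hK4 : ∀ a b c d : Fin 12, Icosahedron.Adj a b → Icosahedron.Adj a c →
      Icosahedron.Adj a d → Icosahedron.Adj b c → Icosahedron.Adj b d →
      Icosahedron.Adj c d → False := by
    decide
  intro s hs
  obtain ⟨a, ha⟩ := card_pos.1 (show 0 < #s by rw [hs.2]; omega)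
  obtain ⟨b, c, d, hbc, hbd, hcd, hs'⟩ := is3Clique_iff.1 (hs.erase_of_mem ha)
  have hmem : ∀ x ∈ ({b, c, d} : Finset (Fin 12)), x ∈ s ∧ x ≠ a := fun x hx => by
    rw [← hs'] at hx; exact ⟨mem_of_mem_erase hx, ne_of_mem_erase hx⟩
  have hadj : ∀ x ∈ ({b, c, d} : Finset (Fin 12)), Icosahedron.Adj a x := fun x hx =>
    hs.1 ha (hmem x hx).1 (hmem x hx).2.symm
  simp only [mem_insert, mem_singleton, forall_eq_or_imp, forall_eq] at hadj
  exact hK4 a b c d hadj.1 hadj.2.1 hadj.2.2 hbc hbd hcd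

lemma exists_private_neighbor {U : Finset (Fin 12)} (hU : Icosahedron.IsNClique 3 U)
    {u : Fin 12} (hu : u ∈ U) :
    ∃ w ∉ U, Icosahedron.Adj u w ∧ ∀ v ∈ U, v ≠ u → ¬Icosahedron.Adj w v := by
  have key : ∀ a b c : Fin 12, Icosahedron.Adj a b → Icosahedron.Adj a c →
      Icosahedron.Adj b c → ∃ w ∉ ({a, b, c} : Finset (Fin 12)), Icosahedron.Adj a w ∧
        ∀ v ∈ ({a, b, c} : Finset (Fin 12)), v ≠ a → ¬Icosahedron.Adj w v := by
    decide
  obtain ⟨a, b, c, hab, hac, hbc, rfl⟩ := is3Clique_iff.1 hU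
  simp only [mem_insert, mem_singleton] at hu
  rcases hu with rfl | rfl | rfl
  · exact key _ _ _ hab hac hbc
  · rw [insert_comm]
    exact key _ _ _ hab.symm hbc hac
  · rw [pair_comm, insert_comm]
    exact key _ _ _ hac.symm hbc.symm hab

lemma six_le_card_of_isIncidentEdgeCliqueCover {U : Finset (Fin 12)}
    {𝒞 : Finset (Finset (Fin 12))} (hU : #U = 3) (h : IsIncidentEdgeCliqueCover Icosahedron U 𝒞) :
    6 ≤ #𝒞 := by
  have hmem : ∀ u ∈ U, 3 ≤ #{C ∈ 𝒞 | u ∈ C} := fun u hu => by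
    have := h.degree_le_two_mul cliqueFree_four hu
    rw [degree_eq] at this
    omega
  by_cases hclique : Icosahedron.IsClique (U : Set (Fin 12))
  · refine six_le_card_of_forall_exists_inter_eq_singleton cliqueFree_four h.1 hU
      (fun u hu => ?_) hmem
    obtain ⟨w, hw, huw, hwU⟩ := exists_private_neighbor ⟨hclique, hU⟩ hu
    exact h.exists_inter_eq_singleton hu hw huw hwU
  · obtain ⟨x, hx, y, hy, hxy, hnadj⟩ : ∃ x ∈ U, ∃ y ∈ U, x ≠ y ∧ ¬Icosahedron.Adj x y := by
      simpa [SimpleGraph.IsClique, Set.Pairwise] using hclique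
    have := card_filter_mem_add_card_filter_mem_le h.1 hxy hnadj
    have := hmem x hx
    have := hmem y hy
    omega

/-- Labels `0, …, 11` are the vertices of the icosahedron as in `icosaEdges`, `12, …, 15` the
isolated vertices. Every arc increases the label, and the in-neighbourhood of each vertex is a
clique of the icosahedron. -/
def witnessArcs : List (ℕ × ℕ) :=
  [(0,2),(1,2),(0,3),(1,3),(2,3),(0,4),(2,4),(3,4),(0,5),(3,5),(4,5),
   (0,6),(4,6),(5,6),(1,7),(5,7),(6,7),(1,8),(6,8),(7,8),(2,9),(7,9),(8,9),
   (3,10),(8,10),(9,10),(4,11),(9,11),(10,11),(11,12),(6,12),(7,12),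
   (11,13),(8,13),(9,13),(11,14),(10,14),(6,14),(5,15),(10,15)]

def witnessLabel : Fin 12 ⊕ Fin 4 → ℕ := Sum.elim (fun i => i) (fun j => 12 + j)

def witness (a b : Fin 12 ⊕ Fin 4) : Prop := (witnessLabel a, witnessLabel b) ∈ witnessArcs

instance : DecidableRel witness := fun _ _ => inferInstanceAs (Decidable (_ ∈ _))

lemma witness_acyclic : DigraphAcyclic witness :=
  digraphAcyclic_of_forall_lt witnessLabel (by decide)

lemma competitionGraph_witness : CompetitionGraph witness = addIsolated Icosahedron 4 := by
  ext x y
  revert x y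
  unfold CompetitionGraph addIsolated
  decide

lemma isCompetitionWitness_four : IsCompetitionWitness Icosahedron 4 :=
  ⟨witness, witness_acyclic, competitionGraph_witness⟩

end Icosahedron

theorem competition_number_icosahedron :
    compNum Icosahedron = 4 := by
  refine le_antisymm (Nat.sInf_le Icosahedron.isCompetitionWitness_four)
    (le_csInf ⟨4, Icosahedron.isCompetitionWitness_four⟩ fun k hk => ?_)
  obtain ⟨U, hU, 𝒞, h𝒞k, h𝒞⟩ :=
    hk.exists_isIncidentEdgeCliqueCover (m := 3) (by norm_num) (by simp)
  have := Icosahedron.six_le_card_of_isIncidentEdgeCliqueCover hU h𝒞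
  omega
end
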